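/- arXiv:2305.13404 — 6 statements merged into one kernel-verified Lean document; each statement's English description precedes it below -/
import Mathlib

section
/- Let L : ℝⁿ → ℝ be strictly convex and twice continuously differentiable, and let G be a group acting on ℝⁿ such that L(g · w) = L(w) for all g ∈ G and w ∈ ℝⁿ, and such that the action is transitive on level sets of L: for any w_a, w_b ∈ ℝⁿ with L(w_a) = L(w_b) there exists g ∈ G with w_a = g · w_b. Assume furthermore that for every value c in the range of L the supremum of ‖∇L(w)‖² over the level set {w : L(w) = c} is attained. If two points w₁, w₂ ∈ ℝⁿ satisfy max_{g∈G} ‖∇L(g · w₁)‖² = ‖∇L(w₂)‖², then L(w₁) ≤ L(w₂). -/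
/-!
Suppose `L w₂ < L w₁`. Along the ray from `w₂` in the direction `d = ∇L(w₂)`, strict convexity
makes `L` grow at least linearly, so the ray meets the level set of `w₁` at some `v`, and the
strict monotonicity of the gradient of a strictly convex function gives `‖d‖² < ⟪∇L(v), d⟫`,
hence `‖∇L(w₂)‖ < ‖∇L(v)‖` (when `d = 0`, any `v` on that level set works, since the only
critical point is the minimum). Transitivity puts `v` in the orbit of `w₁`, so the maximum over
the orbit exceeds `‖∇L(w₂)‖²`.
-/

open Set
open scoped Gradient RealInnerProductSpace

theorem StrictConvexOn.comp_add_smul {E : Type*} [AddCommGroup E] [Module ℝ E] {f : E → ℝ}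
    (hf : StrictConvexOn ℝ univ f) (x : E) {d : E} (hd : d ≠ 0) : StrictConvexOn ℝ univ fun t : ℝ => f (x + t • d) := by
  refine ⟨convex_univ, fun s _ t _ hst a b ha hb hab => ?_⟩
  have hne : x + s • d ≠ x + t • d := fun h =>
    hst (smul_left_injective ℝ hd (add_left_cancel h))
  have hcomb : a • (x + s • d) + b • (x + t • d) = x + (a • s + b • t) • d := by
    linear_combination (norm := module) hab • x
  simpa only [hcomb] using hf.2 (mem_univ _) (mem_univ _) hne ha hb hab

section Gradient

variable {E : Type*} [NormedAddCommGroup E] [InnerProductSpace ℝ E] [CompleteSpace E]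
  {f : E → ℝ} {x y : E}

theorem HasGradientAt.hasDerivAt_comp_add_smul {g d : E} {t : ℝ}
    (hf : HasGradientAt f g (x + t • d)) :
    HasDerivAt (fun s : ℝ => f (x + s • d)) ⟪g, d⟫ t := by
  have hline : HasDerivAt (fun s : ℝ => x + s • d) d t := by
    simpa using ((hasDerivAt_id t).smul_const d).const_add x
  exact hf.hasFDerivAt.comp_hasDerivAt t hline

theorem StrictConvexOn.add_inner_gradient_lt (hf : StrictConvexOn ℝ univ f)
    (hfx : DifferentiableAt ℝ f x) (hxy : x ≠ y) : f x + ⟪∇ f x, y - x⟫ < f y := by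
  have hderiv : HasDerivAt (fun t : ℝ => f (x + t • (y - x))) ⟪∇ f x, y - x⟫ 0 :=
    HasGradientAt.hasDerivAt_comp_add_smul (by simpa using hfx.hasGradientAt)
  have hslope := (hf.comp_add_smul x (sub_ne_zero.2 hxy.symm)).lt_slope_of_hasDerivAt
    (mem_univ 0) (mem_univ 1) one_pos hderiv
  simp only [slope_def_field, one_smul, zero_smul, add_zero, add_sub_cancel, sub_zero,
    div_one] at hslope
  linarith

theorem StrictConvexOn.inner_gradient_sub_gradient_pos (hf : StrictConvexOn ℝ univ f)
    (hfx : DifferentiableAt ℝ f x) (hfy : DifferentiableAt ℝ f y) (hxy : x ≠ y) :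
    0 < ⟪∇ f y - ∇ f x, y - x⟫ := by
  have hx := hf.add_inner_gradient_lt hfx hxy
  have hy := hf.add_inner_gradient_lt hfy hxy.symm
  rw [← neg_sub y x, inner_neg_right] at hy
  rw [inner_sub_left]
  linarith

theorem StrictConvexOn.exists_norm_gradient_lt (hf : StrictConvexOn ℝ univ f)
    (hdiff : Differentiable ℝ f) {c : ℝ} (hc : c ∈ range f) (hxc : f x < c) :
    ∃ v, f v = c ∧ ‖∇ f x‖ < ‖∇ f v‖ := by
  set d := ∇ f x
  by_cases hd : d = 0
  · obtain ⟨y, rfl⟩ := hc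
    refine ⟨y, rfl, ?_⟩
    rw [hd, norm_zero, norm_pos_iff]
    intro hy
    have := hf.add_inner_gradient_lt (hdiff y) (ne_of_apply_ne f hxc.ne')
    rw [hy, inner_zero_left, add_zero] at this
    linarith
  have hd2 : 0 < ‖d‖ ^ 2 := by positivity
  set T := (c - f x) / ‖d‖ ^ 2
  have hT : 0 < T := div_pos (sub_pos.2 hxc) hd2
  have hcT : c < f (x + T • d) := by
    have := hf.add_inner_gradient_lt (hdiff x) (y := x + T • d) (by simp [hd, hT.ne'])
    rwa [add_sub_cancel_left, inner_smul_right, real_inner_self_eq_norm_sq,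
      div_mul_cancel₀ _ hd2.ne', add_sub_cancel] at this
  have hcont : ContinuousOn (fun t : ℝ => f (x + t • d)) (Icc 0 T) :=
    (hdiff.continuous.comp (by fun_prop)).continuousOn
  obtain ⟨t, ⟨ht0, -⟩, hft⟩ :=
    intermediate_value_Icc hT.le hcont ⟨by simpa using hxc.le, hcT.le⟩
  have hxv : x ≠ x + t • d := fun h => by simp [← h, hxc.ne] at hft
  have ht : 0 < t := ht0.lt_of_ne (by rintro rfl; simp at hxv)
  refine ⟨x + t • d, hft, ?_⟩
  have hmono := hf.inner_gradient_sub_gradient_pos (hdiff x) (hdiff _) hxv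
  rw [add_sub_cancel_left, inner_smul_right, inner_sub_left, real_inner_self_eq_norm_sq] at hmono
  have hcs := real_inner_le_norm (∇ f (x + t • d)) d
  have hlt : ‖d‖ * ‖d‖ < ‖∇ f (x + t • d)‖ * ‖d‖ := by nlinarith
  exact lt_of_mul_lt_mul_right hlt (norm_nonneg d)

end Gradient

/-- for a strictly convex C² loss with a symmetry group acting transitively on
level sets (and the sup of the squared gradient norm attained on each level set), if the
maximal squared gradient norm over the orbit of `w₁` equals `‖∇L(w₂)‖²`, then `L w₁ ≤ L w₂`. -/
theorem stmt4 {n : ℕ} (L : EuclideanSpace ℝ (Fin n) → ℝ)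
    (hsc : StrictConvexOn ℝ Set.univ L) (hC2 : ContDiff ℝ 2 L)
    (G : Type*) [Group G] [MulAction G (EuclideanSpace ℝ (Fin n))]
    (hinv : ∀ (g : G) w, L (g • w) = L w)
    (htrans : ∀ wa wb, L wa = L wb → ∃ g : G, wa = g • wb)
    (hattain : ∀ c ∈ Set.range L,
      ∃ w, L w = c ∧ ∀ v, L v = c → ‖gradient L v‖ ^ 2 ≤ ‖gradient L w‖ ^ 2)
    (w₁ w₂ : EuclideanSpace ℝ (Fin n))
    (hmax : (⨆ g : G, ‖gradient L (g • w₁)‖ ^ 2) = ‖gradient L w₂‖ ^ 2) :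
    L w₁ ≤ L w₂ := by
  obtain ⟨w, -, hw⟩ := hattain (L w₁) ⟨w₁, rfl⟩
  have horbit : BddAbove (range fun g : G => ‖∇ L (g • w₁)‖ ^ 2) :=
    ⟨_, by rintro _ ⟨g, rfl⟩; exact hw _ (hinv g w₁)⟩
  by_contra! hlt
  obtain ⟨v, hv, hsteep⟩ :=
    hsc.exists_norm_gradient_lt (hC2.differentiable two_ne_zero) ⟨w₁, rfl⟩ hlt
  obtain ⟨g, rfl⟩ := htrans v w₁ hv
  have hle : ‖∇ L (g • w₁)‖ ^ 2 ≤ ‖∇ L w₂‖ ^ 2 := hmax ▸ le_ciSup horbit g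
  exact hle.not_gt (pow_lt_pow_left₀ hsteep (norm_nonneg _) two_ne_zero)
end

section
/- Let A ∈ ℝ^{n×n} be a symmetric positive definite matrix, let w ∈ ℝⁿ, and let α, β ∈ ℤ. Then (wᵀ A^α w)² ≤ (wᵀ A^{α+β} w) · (wᵀ A^{α−β} w), where integer powers A^γ for negative γ are defined via the inverse of A. -/
/-!
Write `v = A^β w` and `B = A^(α-β)`, which is positive semidefinite. Then `B v = A^α w` and,
since `A^β` is symmetric, `vᵀ B v = wᵀ A^(α+β) w`; the claim is the Cauchy–Schwarz inequality
`(wᵀ B v)² ≤ (wᵀ B w)(vᵀ B v)` for the semidefinite form of `B`.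
-/

open Matrix

namespace Matrix

variable {ι : Type*} [Fintype ι]

lemma IsSymm.dotProduct_mulVec_comm {M : Matrix ι ι ℝ} (hM : M.IsSymm) (x y : ι → ℝ) :
    y ⬝ᵥ M *ᵥ x = x ⬝ᵥ M *ᵥ y := by
  rw [dotProduct_mulVec, ← hM.eq, vecMul_transpose, dotProduct_comm, hM.eq]

lemma PosSemidef.dotProduct_mulVec_sq_le [DecidableEq ι] {M : Matrix ι ι ℝ} (hM : M.PosSemidef)
    (x y : ι → ℝ) :
    (x ⬝ᵥ M *ᵥ y) ^ 2 ≤ (x ⬝ᵥ M *ᵥ x) * (y ⬝ᵥ M *ᵥ y) := by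
  have hsymm : M.IsSymm := isHermitian_iff_isSymm.mp hM.isHermitian
  have hnonneg (z : ι → ℝ) : 0 ≤ toLinearMap₂' ℝ M z z := by
    simpa [toLinearMap₂'_apply'] using hM.dotProduct_mulVec_nonneg z
  have := LinearMap.BilinForm.apply_mul_apply_le_of_forall_zero_le _ hnonneg x y
  simpa only [toLinearMap₂'_apply', hsymm.dotProduct_mulVec_comm y x, ← sq] using this

lemma IsSymm.mulVec_dotProduct_mulVec {S : Matrix ι ι ℝ} (hS : S.IsSymm) (M : Matrix ι ι ℝ)
    (x y : ι → ℝ) : (S *ᵥ x) ⬝ᵥ M *ᵥ y = x ⬝ᵥ (S * M) *ᵥ y := by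
  rw [← mulVec_mulVec, hS.dotProduct_mulVec_comm, dotProduct_comm]

end Matrix

theorem stmt5_general {n : ℕ} (A : Matrix (Fin n) (Fin n) ℝ) (hA : A.PosDef)
    (w : Fin n → ℝ) (α β : ℤ) :
    (w ⬝ᵥ (A ^ α).mulVec w) ^ 2 ≤
      (w ⬝ᵥ (A ^ (α + β)).mulVec w) * (w ⬝ᵥ (A ^ (α - β)).mulVec w) := by
  have hdet : IsUnit A.det := isUnit_iff_ne_zero.mpr hA.det_pos.ne'
  have hsymm : A.IsSymm := isHermitian_iff_isSymm.mp hA.isHermitian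
  have hBv : A ^ (α - β) *ᵥ (A ^ β *ᵥ w) = A ^ α *ᵥ w := by
    rw [mulVec_mulVec, ← zpow_add hdet, sub_add_cancel]
  have hvBv : (A ^ β *ᵥ w) ⬝ᵥ A ^ (α - β) *ᵥ (A ^ β *ᵥ w) = w ⬝ᵥ A ^ (α + β) *ᵥ w := by
    rw [hBv, (hsymm.zpow β).mulVec_dotProduct_mulVec, ← zpow_add hdet, add_comm]
  have := (hA.posSemidef.zpow (α - β)).dotProduct_mulVec_sq_le w (A ^ β *ᵥ w)
  rw [hvBv, hBv] at this
  linarith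

/-- for a symmetric positive definite matrix `A`, any vector `w` and any
integers `α, β`, one has `(wᵀ A^α w)² ≤ (wᵀ A^{α+β} w) (wᵀ A^{α-β} w)`. -/
theorem stmt5 {n : ℕ} (A : Matrix (Fin n) (Fin n) ℝ) (hA : A.PosDef) (hsymm : A.IsSymm)
    (w : Fin n → ℝ) (α β : ℤ) :
    (w ⬝ᵥ (A ^ α).mulVec w) ^ 2 ≤
      (w ⬝ᵥ (A ^ (α + β)).mulVec w) * (w ⬝ᵥ (A ^ (α - β)).mulVec w) :=
  stmt5_general A hA w α β
end

section
/- Let L : ℝⁿ → ℝ be a convex, twice continuously differentiable function, and let w ∈ ℝⁿ be a point at which the Hessian H = ∇²L(w) is invertible and the gradient g = ∇L(w) is nonzero. Define the gradient-descent direction v₁ = −g, the Newton direction v₂ = −H⁻¹ g, the projection v_∥ = ((v₂ · v₁)/‖v₁‖²) v₁, and the orthogonal component v_⊥ = v₂ − v_∥. Then the directional derivative of the function u ↦ ‖∇L(u)‖² at w along v_⊥, which equals v_⊥ · (2 H g), is nonnegative: v_⊥ · (2 ∇²L(w) ∇L(w)) ≥ 0. -/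
/-!
The Hessian `H` is a positive operator: symmetric by Schwarz's theorem, and positive
semidefinite because `t ↦ ⟪∇L(w + t v), v⟫` is the derivative of the convex function
`t ↦ L(w + t v)`, hence monotone.
For `p = H⁻¹ g` we have `⟪p, H g⟫ = ⟪H p, g⟫ = ‖g‖²`, and Cauchy–Schwarz for the semi-inner
product `⟪H ·, ·⟫` gives `‖g‖⁴ = ⟪H p, g⟫² ≤ ⟪g, p⟫ ⟪H g, g⟫`. Since
`v_⊥ = -(p - (⟪p, g⟫ / ‖g‖²) g)`, this is exactly `⟪v_⊥, 2 H g⟫ ≥ 0`.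
-/

open scoped RealInnerProductSpace

open InnerProductSpace Topology Set

variable {E : Type*} [NormedAddCommGroup E] [InnerProductSpace ℝ E]

namespace ContinuousLinearMap.IsPositive

variable {T : E →L[ℝ] E}

theorem inner_apply_sq_le (hT : T.IsPositive) (x y : E) :
    ⟪T x, y⟫ ^ 2 ≤ ⟪T x, x⟫ * ⟪T y, y⟫ := by
  have hquad : ∀ t : ℝ, 0 ≤ ⟪T y, y⟫ * (t * t) + (2 * ⟪T x, y⟫) * t + ⟪T x, x⟫ := by
    intro t
    have hyx : ⟪T y, x⟫ = ⟪T x, y⟫ := by rw [hT.inner_left_eq_inner_right, real_inner_comm]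
    have := hT.inner_nonneg_left (x + t • y)
    simp only [map_add, map_smul, inner_add_left, inner_add_right, real_inner_smul_left,
      real_inner_smul_right, hyx] at this
    linarith
  have := discrim_le_zero hquad
  rw [discrim] at this
  linarith

theorem inner_sub_smul_apply_nonpos (hT : T.IsPositive) {p g : E} (hp : T p = g) :
    ⟪p - (⟪p, g⟫ / ‖g‖ ^ 2) • g, T g⟫ ≤ 0 := by
  have hpTg : ⟪p, T g⟫ = ‖g‖ ^ 2 := by
    rw [← hT.inner_left_eq_inner_right, hp, real_inner_self_eq_norm_sq]
  have hcs : (‖g‖ ^ 2) ^ 2 ≤ ⟪p, g⟫ * ⟪g, T g⟫ := by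
    have := hT.inner_apply_sq_le p g
    rwa [hp, real_inner_self_eq_norm_sq, ← real_inner_comm g p, ← real_inner_comm (T g) g] at this
  rw [inner_sub_left, real_inner_smul_left, hpTg, sub_nonpos, div_mul_eq_mul_div]
  rcases (sq_nonneg ‖g‖).eq_or_lt with h0 | hpos
  · rw [← h0, div_zero]
  · rwa [le_div_iff₀ hpos, ← sq]

end ContinuousLinearMap.IsPositive

variable [CompleteSpace E] {L : E → ℝ}

theorem ConvexOn.monotone_inner_gradient_lineMap (hconv : ConvexOn ℝ univ L)
    (hL : Differentiable ℝ L) (a b : E) :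
    Monotone fun t : ℝ ↦ ⟪gradient L (AffineMap.lineMap a b t), b - a⟫ := by
  have hderiv : ∀ t : ℝ, HasDerivAt (L ∘ AffineMap.lineMap a b)
      ⟪gradient L (AffineMap.lineMap a b t), b - a⟫ t := fun t ↦
    (hasGradientAt_iff_hasFDerivAt.1 (hL _).hasGradientAt).comp_hasDerivAt t
      AffineMap.hasDerivAt_lineMap
  have hmono := (hconv.comp_affineMap (AffineMap.lineMap a b)).monotoneOn_deriv
    fun t _ ↦ (hderiv t).differentiableAt
  intro s t hst
  simpa only [(hderiv _).deriv] using hmono (mem_univ s) (mem_univ t) hst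

variable {x : E} {H : E →L[ℝ] E}

theorem isSymmetric_of_hasFDerivAt_gradient (hL : ∀ᶠ y in 𝓝 x, DifferentiableAt ℝ L y)
    (hH : HasFDerivAt (gradient L) H x) : H.IsSymmetric := by
  let toDualCLM : E →L[ℝ] E →L[ℝ] ℝ :=
    (toDual ℝ E).toContinuousLinearEquiv.toContinuousLinearMap
  have hf : ∀ᶠ y in 𝓝 x, HasFDerivAt L (toDualCLM (gradient L y)) y :=
    hL.mono fun y hy ↦ hasGradientAt_iff_hasFDerivAt.1 hy.hasGradientAt
  intro u v
  change ⟪H u, v⟫ = ⟪u, H v⟫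
  rw [← real_inner_comm u]
  simpa [toDualCLM] using
    second_derivative_symmetric_of_eventually hf (toDualCLM.hasFDerivAt.comp x hH) u v

theorem ConvexOn.inner_hessian_self_nonneg (hconv : ConvexOn ℝ univ L) (hL : Differentiable ℝ L)
    (hH : HasFDerivAt (gradient L) H x) (v : E) : 0 ≤ ⟪H v, v⟫ := by
  have hline : HasDerivAt (gradient L ∘ AffineMap.lineMap (k := ℝ) x (x + v)) (H v) 0 := by
    rw [← AffineMap.lineMap_apply_zero x (x + v) (k := ℝ)] at hH
    simpa using hH.comp_hasDerivAt (0 : ℝ) AffineMap.hasDerivAt_lineMap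
  have hderiv := hline.inner ℝ (hasDerivAt_const (0 : ℝ) v)
  rw [inner_zero_right, zero_add] at hderiv
  have hmono := hconv.monotone_inner_gradient_lineMap hL x (x + v)
  rw [add_sub_cancel_left] at hmono
  exact hderiv.nonneg_of_monotone hmono

theorem ConvexOn.isPositive_hessian (hconv : ConvexOn ℝ univ L) (hL : Differentiable ℝ L)
    (hH : HasFDerivAt (gradient L) H x) : H.IsPositive :=
  (H.isPositive_iff).2 ⟨isSymmetric_of_hasFDerivAt_gradient (.of_forall hL) hH,
    hconv.inner_hessian_self_nonneg hL hH⟩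

theorem stmt6_general {n : ℕ} (L : EuclideanSpace ℝ (Fin n) → ℝ)
    (hconv : ConvexOn ℝ Set.univ L) (hC2 : ContDiff ℝ 2 L)
    (w : EuclideanSpace ℝ (Fin n))
    (H : EuclideanSpace ℝ (Fin n) ≃L[ℝ] EuclideanSpace ℝ (Fin n))
    (hH : HasFDerivAt (gradient L)
      (H : EuclideanSpace ℝ (Fin n) →L[ℝ] EuclideanSpace ℝ (Fin n)) w)
    (g : EuclideanSpace ℝ (Fin n))
    (v₁ v₂ vpar vperp : EuclideanSpace ℝ (Fin n))
    (hv₁ : v₁ = -g) (hv₂ : v₂ = -(H.symm g))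
    (hvpar : vpar = (⟪v₂, v₁⟫ / ‖v₁‖ ^ 2) • v₁)
    (hvperp : vperp = v₂ - vpar) :
    0 ≤ ⟪vperp, (2 : ℝ) • H g⟫ := by
  have hpos : (H : EuclideanSpace ℝ (Fin n) →L[ℝ] EuclideanSpace ℝ (Fin n)).IsPositive :=
    hconv.isPositive_hessian (hC2.differentiable (by norm_num)) hH
  have hperp := hpos.inner_sub_smul_apply_nonpos (H.apply_symm_apply g)
  have hvperp_eq : vperp = -(H.symm g - (⟪H.symm g, g⟫ / ‖g‖ ^ 2) • g) := by
    rw [hvperp, hvpar, hv₂, hv₁, inner_neg_neg, norm_neg]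
    module
  rw [ContinuousLinearEquiv.coe_coe] at hperp
  rw [hvperp_eq, inner_neg_left, real_inner_smul_right]
  linarith

/-- for a convex C² function with invertible Hessian `H` and nonzero gradient `g`
at `w`, the directional derivative of `u ↦ ‖∇L(u)‖²` at `w` along the component `v_⊥` of the
Newton direction orthogonal to the gradient, namely `⟪v_⊥, 2 H g⟫`, is nonnegative. -/
theorem stmt6 {n : ℕ} (L : EuclideanSpace ℝ (Fin n) → ℝ)
    (hconv : ConvexOn ℝ Set.univ L) (hC2 : ContDiff ℝ 2 L)
    (w : EuclideanSpace ℝ (Fin n))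
    (H : EuclideanSpace ℝ (Fin n) ≃L[ℝ] EuclideanSpace ℝ (Fin n))
    (hH : HasFDerivAt (gradient L)
      (H : EuclideanSpace ℝ (Fin n) →L[ℝ] EuclideanSpace ℝ (Fin n)) w)
    (g : EuclideanSpace ℝ (Fin n)) (hgdef : g = gradient L w) (hg : g ≠ 0)
    (v₁ v₂ vpar vperp : EuclideanSpace ℝ (Fin n))
    (hv₁ : v₁ = -g) (hv₂ : v₂ = -(H.symm g))
    (hvpar : vpar = (⟪v₂, v₁⟫ / ‖v₁‖ ^ 2) • v₁)
    (hvperp : vperp = v₂ - vpar) :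
    0 ≤ ⟪vperp, (2 : ℝ) • H g⟫ :=
  stmt6_general L hconv hC2 w H hH g v₁ v₂ vpar vperp hv₁ hv₂ hvpar hvperp
end

section
/- Let L : ℝⁿ → ℝ be strictly convex and twice continuously differentiable with positive definite Hessian everywhere, let w₀ ∈ ℝⁿ, and let w' be a maximizer of ‖∇L(w)‖² over the level set {w ∈ ℝⁿ : L(w) = L(w₀)}. If ∇L(w') ≠ 0, then ∇L(w') is an eigenvector of the Hessian ∇²L(w'): there exists λ₀ ∈ ℝ with ∇²L(w') ∇L(w') = λ₀ ∇L(w'), and moreover 0 < λ₀ ≤ λ_max(∇²L(w')), where λ_max denotes the largest eigenvalue. -/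
open scoped RealInnerProductSpace

/-- The largest eigenvalue of a (self-adjoint) operator on Euclidean space, via the
variational (Rayleigh-quotient) characterization. -/
noncomputable def lamMax {n : ℕ}
    (T : EuclideanSpace ℝ (Fin n) →L[ℝ] EuclideanSpace ℝ (Fin n)) : ℝ :=
  ⨆ v : Metric.sphere (0 : EuclideanSpace ℝ (Fin n)) 1,
    ⟪T (v : EuclideanSpace ℝ (Fin n)), (v : EuclideanSpace ℝ (Fin n))⟫

/-!
At a maximizer `w'` of `‖∇L‖²` on the level set `{L = L w₀}` with `∇L(w') ≠ 0`, the Lagrange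
multiplier rule gives `a ∇L(w') + b ∇(‖∇L‖²)(w') = 0` with `(a, b) ≠ 0`. Since the Hessian
`H = ∇²L(w')` is symmetric, `∇(‖∇L‖²)(w') = 2 H ∇L(w')`, and `b ≠ 0` because `∇L(w') ≠ 0`; hence
`∇L(w')` is an eigenvector of `H`. Its eigenvalue is the Rayleigh quotient of `H` at `∇L(w')`,
which is positive by positive definiteness and at most `λ_max(H)` by its variational definition.
-/

open InnerProductSpace

theorem exists_eq_smul_of_smul_add_smul_eq_zero {K V : Type*} [Field K] [AddCommGroup V]
    [Module K V] {a b : K} {v w : V} (hab : (a, b) ≠ 0) (hv : v ≠ 0) (h : a • v + b • w = 0) :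
    ∃ μ : K, w = μ • v := by
  have hb : b ≠ 0 := by
    rintro rfl
    have ha : a ≠ 0 := fun ha => hab (by simp [ha])
    simp [ha, hv] at h
  refine ⟨-(b⁻¹ * a), ?_⟩
  calc w = b⁻¹ • b • w := (inv_smul_smul₀ hb w).symm
    _ = b⁻¹ • -(a • v) := by rw [eq_neg_of_add_eq_zero_right h]
    _ = -(b⁻¹ * a) • v := by rw [smul_neg, smul_smul, neg_smul]

section Gradient

variable {E : Type*} [NormedAddCommGroup E] [InnerProductSpace ℝ E] [CompleteSpace E]
  {L : E → ℝ} {x : E}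

theorem gradient_eq_riesz_comp_fderiv (L : E → ℝ) :
    gradient L = (toDual ℝ E).symm.toLinearIsometry.toContinuousLinearMap ∘ fderiv ℝ L :=
  rfl

theorem contDiffAt_gradient {k : WithTop ℕ∞} (hL : ContDiffAt ℝ (k + 1) L x) :
    ContDiffAt ℝ k (gradient L) x := by
  rw [gradient_eq_riesz_comp_fderiv]
  exact (ContinuousLinearMap.contDiff _).contDiffAt.comp x hL.fderiv_right_succ

theorem inner_fderiv_gradient_apply (hL : ContDiffAt ℝ 2 L x) (u v : E) :
    ⟪fderiv ℝ (gradient L) x u, v⟫ = fderiv ℝ (fderiv ℝ L) x u v := by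
  have hD : DifferentiableAt ℝ (fderiv ℝ L) x :=
    (hL.fderiv_right_succ (n := 1)).differentiableAt one_ne_zero
  rw [gradient_eq_riesz_comp_fderiv,
    fderiv_comp x (ContinuousLinearMap.differentiableAt _) hD, ContinuousLinearMap.fderiv]
  exact toDual_symm_apply

theorem isSymmetric_fderiv_gradient (hL : ContDiffAt ℝ 2 L x) :
    (fderiv ℝ (gradient L) x : E →ₗ[ℝ] E).IsSymmetric := by
  have hsymm : IsSymmSndFDerivAt ℝ L x :=
    hL.isSymmSndFDerivAt (by simp [minSmoothness_of_isRCLikeNormedField])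
  intro u v
  rw [ContinuousLinearMap.coe_coe, real_inner_comm _ u, inner_fderiv_gradient_apply hL,
    inner_fderiv_gradient_apply hL, hsymm.eq]

theorem IsLocalExtrOn.exists_fderiv_gradient_apply_eq_smul
    (hextr : IsLocalExtrOn (fun w => ‖gradient L w‖ ^ 2) {w | L w = L x} x)
    (hL : ContDiffAt ℝ 2 L x) (hg : gradient L x ≠ 0) :
    ∃ μ : ℝ, fderiv ℝ (gradient L) x (gradient L x) = μ • gradient L x := by
  set H := fderiv ℝ (gradient L) x
  have hL' : HasStrictFDerivAt L (fderiv ℝ L x) x := hL.hasStrictFDerivAt (by norm_num)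
  have hg' : HasStrictFDerivAt (gradient L) H x :=
    (contDiffAt_gradient (k := 1) hL).hasStrictFDerivAt one_ne_zero
  obtain ⟨a, b, hab, hmult⟩ := hextr.exists_multipliers_of_hasStrictFDerivAt_1d hL'
    ((hasStrictFDerivAt_norm_sq _).comp x hg')
  refine exists_eq_smul_of_smul_add_smul_eq_zero (a := a) (b := 2 * b) ?_ hg ?_
  · simpa using hab
  · refine ext_inner_right ℝ fun y => ?_
    have hy := congr($hmult y)
    have hH : ⟪H (gradient L x), y⟫ = ⟪gradient L x, H y⟫ := isSymmetric_fderiv_gradient hL _ y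
    simp only [add_apply, smul_apply, ContinuousLinearMap.comp_apply, zero_apply,
      innerSL_apply_apply, ← inner_gradient_left, nsmul_eq_mul, Nat.cast_ofNat, smul_eq_mul] at hy
    rw [inner_add_left, real_inner_smul_left, real_inner_smul_left, hH, inner_zero_left]
    linarith

end Gradient

section Rayleigh

variable {E : Type*} [NormedAddCommGroup E] [InnerProductSpace ℝ E]

theorem pos_of_apply_eq_smul_of_inner_apply_pos {T : E →L[ℝ] E} {v : E} {μ : ℝ}
    (hv : T v = μ • v) (hT : 0 < ⟪T v, v⟫) : 0 < μ := by
  rw [hv, real_inner_smul_left] at hT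
  exact pos_of_mul_pos_left hT real_inner_self_nonneg

theorem bddAbove_range_inner_apply_sphere (T : E →L[ℝ] E) :
    BddAbove (Set.range fun v : Metric.sphere (0 : E) 1 => ⟪T v, v⟫) := by
  refine ⟨‖T‖, ?_⟩
  rintro _ ⟨⟨v, hv⟩, rfl⟩
  have hv1 : ‖v‖ = 1 := mem_sphere_zero_iff_norm.mp hv
  calc ⟪T v, v⟫ ≤ ‖T v‖ * ‖v‖ := real_inner_le_norm _ _
    _ ≤ ‖T‖ * ‖v‖ * ‖v‖ := by gcongr; exact T.le_opNorm v
    _ = ‖T‖ := by rw [hv1, mul_one, mul_one]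

end Rayleigh

theorem le_lamMax_of_apply_eq_smul {n : ℕ}
    {T : EuclideanSpace ℝ (Fin n) →L[ℝ] EuclideanSpace ℝ (Fin n)} {v : EuclideanSpace ℝ (Fin n)}
    {μ : ℝ} (hv : v ≠ 0) (hTv : T v = μ • v) : μ ≤ lamMax T := by
  set u := ‖v‖⁻¹ • v
  have hu : u ∈ Metric.sphere (0 : EuclideanSpace ℝ (Fin n)) 1 := by
    simp [u, norm_smul, norm_ne_zero_iff.mpr hv]
  have hTu : ⟪T u, u⟫ = μ := by
    rw [map_smul, hTv, smul_smul, real_inner_smul_left, real_inner_smul_right,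
      real_inner_self_eq_norm_sq]
    field_simp
  exact hTu ▸ le_ciSup (bddAbove_range_inner_apply_sphere T) ⟨u, hu⟩

theorem stmt9_general {n : ℕ} (L : EuclideanSpace ℝ (Fin n) → ℝ)
    (hC2 : ContDiff ℝ 2 L)
    (hpos : ∀ x v, v ≠ 0 → 0 < ⟪fderiv ℝ (gradient L) x v, v⟫)
    (w₀ w' : EuclideanSpace ℝ (Fin n))
    (hlevel : L w' = L w₀)
    (hmax : ∀ v, L v = L w₀ → ‖gradient L v‖ ^ 2 ≤ ‖gradient L w'‖ ^ 2)
    (hg : gradient L w' ≠ 0) :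
    ∃ lam₀ : ℝ, fderiv ℝ (gradient L) w' (gradient L w') = lam₀ • gradient L w' ∧
      0 < lam₀ ∧ lam₀ ≤ lamMax (fderiv ℝ (gradient L) w') := by
  have hextr : IsLocalExtrOn (fun w => ‖gradient L w‖ ^ 2) {w | L w = L w'} w' :=
    Or.inr <| IsMaxOn.localize fun v hv => hmax v (hv.trans hlevel)
  obtain ⟨μ, hμ⟩ := hextr.exists_fderiv_gradient_apply_eq_smul hC2.contDiffAt hg
  exact ⟨μ, hμ, pos_of_apply_eq_smul_of_inner_apply_pos hμ (hpos w' _ hg),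
    le_lamMax_of_apply_eq_smul hg hμ⟩

/-- at a maximizer `w'` of the squared gradient norm over a level set of a
strictly convex C² function with positive definite Hessian, the gradient is an eigenvector
of the Hessian with eigenvalue `λ₀ ∈ (0, λ_max(∇²L(w'))]`. -/
theorem stmt9 {n : ℕ} (L : EuclideanSpace ℝ (Fin n) → ℝ)
    (hsc : StrictConvexOn ℝ Set.univ L) (hC2 : ContDiff ℝ 2 L)
    (hdiff : ∀ x, DifferentiableAt ℝ (gradient L) x)
    (hpos : ∀ x v, v ≠ 0 → 0 < ⟪fderiv ℝ (gradient L) x v, v⟫)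
    (w₀ w' : EuclideanSpace ℝ (Fin n))
    (hlevel : L w' = L w₀)
    (hmax : ∀ v, L v = L w₀ → ‖gradient L v‖ ^ 2 ≤ ‖gradient L w'‖ ^ 2)
    (hg : gradient L w' ≠ 0) :
    ∃ lam₀ : ℝ, fderiv ℝ (gradient L) w' (gradient L w') = lam₀ • gradient L w' ∧
      0 < lam₀ ∧ lam₀ ≤ lamMax (fderiv ℝ (gradient L) w') :=
  stmt9_general L hC2 hpos w₀ w' hlevel hmax hg
end

section
/- Let L : ℝⁿ → ℝ be three times continuously differentiable, and let w ∈ ℝⁿ be a point at which the gradient is an eigenvector of the Hessian: ∇²L(w) ∇L(w) = λ ∇L(w) for some λ ∈ ℝ. Let M ∈ ℝ^{n×n} be antisymmetric (Mᵀ = −M), define the vector field a(x) = M ∇L(x) and the reverse gradient field r(x) = −∇L(x), with vector fields acting on functions as (Xh)(x) = ∑_i xⁱ(x) ∂h/∂xⁱ(x) and [A,R] denoting the commutator. Then (R([A,R]L))(w) = 2 ∑_{i,j,k,α} M_{jα} (∂L/∂w_k)(w) (∂L/∂w_α)(w) (∂³L/∂w_k ∂w_i ∂w_j)(w) (∂L/∂w_i)(w).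 -/
open Matrix

/-- The `i`-th partial derivative `∂h/∂wⁱ` of a function on Euclidean space. -/
noncomputable def pd {n : ℕ} (i : Fin n) (h : EuclideanSpace ℝ (Fin n) → ℝ)
    (w : EuclideanSpace ℝ (Fin n)) : ℝ :=
  fderiv ℝ h w (EuclideanSpace.single i 1)

/-- The action `(Xh)(w) = ∑ i, xⁱ(w) ∂h/∂wⁱ(w)` of a vector field (given by its component
functions `x`) on a function `h`, as a first-order differential operator. -/
noncomputable def vact {n : ℕ} (x : EuclideanSpace ℝ (Fin n) → Fin n → ℝ)
    (h : EuclideanSpace ℝ (Fin n) → ℝ) (w : EuclideanSpace ℝ (Fin n)) : ℝ :=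
  ∑ i, x w i * pd i h w

/-!
Antisymmetry of `M` gives `A L = (∇L)ᵀ M ∇L = 0` identically, so `[A,R]L = A(RL)` with
`RL = -‖∇L‖²`, whose gradient is `-2 ∇²L ∇L`. Expanding `R(A(RL))` by the Leibniz rule, every
term in which a second derivative of `L` is contracted with `∇L` turns into `λ ∇L` at `w`; these
terms add up to `4λ² (AL)(w) = 0`, and only the third-derivative term survives.
-/

variable {n : ℕ}

section Derivation

variable {f g : EuclideanSpace ℝ (Fin n) → ℝ} {w : EuclideanSpace ℝ (Fin n)}

lemma pd_const (i : Fin n) (c : ℝ) : pd i (fun _ => c) w = 0 := by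
  simp [pd]

lemma pd_neg (i : Fin n) : pd i (fun x => -f x) w = -pd i f w := by
  simp [pd, fderiv_fun_neg]

lemma pd_const_mul (i : Fin n) (c : ℝ) : pd i (fun x => c * f x) w = c * pd i f w := by
  change fderiv ℝ (c • f) w _ = _
  rw [fderiv_const_smul_field]
  rfl

lemma pd_mul (i : Fin n) (hf : DifferentiableAt ℝ f w) (hg : DifferentiableAt ℝ g w) :
    pd i (fun x => f x * g x) w = pd i f w * g w + f w * pd i g w := by
  simp only [pd, fderiv_fun_mul hf hg, _root_.add_apply, _root_.smul_apply, smul_eq_mul]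
  ring

lemma pd_sum {ι : Type*} (i : Fin n) (s : Finset ι) {f : ι → EuclideanSpace ℝ (Fin n) → ℝ}
    (hf : ∀ j ∈ s, DifferentiableAt ℝ (f j) w) :
    pd i (fun x => ∑ j ∈ s, f j x) w = ∑ j ∈ s, pd i (f j) w := by
  simp [pd, fderiv_fun_sum hf]

variable (X : EuclideanSpace ℝ (Fin n) → Fin n → ℝ)

lemma vact_const (c : ℝ) : vact X (fun _ => c) = fun _ => 0 := by
  funext x
  simp [vact, pd_const]

lemma vact_const_mul (c : ℝ) : vact X (fun x => c * f x) w = c * vact X f w := by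
  simp only [vact, pd_const_mul, Finset.mul_sum]
  exact Finset.sum_congr rfl fun i _ => by ring

lemma vact_mul (hf : DifferentiableAt ℝ f w) (hg : DifferentiableAt ℝ g w) :
    vact X (fun x => f x * g x) w = vact X f w * g w + f w * vact X g w := by
  simp only [vact, pd_mul _ hf hg, Finset.sum_mul, Finset.mul_sum, ← Finset.sum_add_distrib]
  exact Finset.sum_congr rfl fun i _ => by ring

lemma vact_sum {ι : Type*} (s : Finset ι) {f : ι → EuclideanSpace ℝ (Fin n) → ℝ}
    (hf : ∀ j ∈ s, DifferentiableAt ℝ (f j) w) :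
    vact X (fun x => ∑ j ∈ s, f j x) w = ∑ j ∈ s, vact X (f j) w := by
  simp only [vact, pd_sum _ s hf, Finset.mul_sum]
  exact Finset.sum_comm

lemma vact_vact {Y : EuclideanSpace ℝ (Fin n) → Fin n → ℝ} {h : EuclideanSpace ℝ (Fin n) → ℝ}
    (hY : ∀ i, DifferentiableAt ℝ (fun x => Y x i) w) (hh : ∀ i, DifferentiableAt ℝ (pd i h) w) :
    vact X (vact Y h) w =
      ∑ i, (vact X (fun x => Y x i) w * pd i h w + Y w i * vact X (pd i h) w) := by
  rw [show vact Y h = fun x => ∑ i, Y x i * pd i h x from rfl,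
    vact_sum X (f := fun i x => Y x i * pd i h x) _ fun i _ => (hY i).mul (hh i)]
  exact Finset.sum_congr rfl fun i _ => vact_mul X (hY i) (hh i)

end Derivation

lemma contDiff_pd {m k : WithTop ℕ∞} {f : EuclideanSpace ℝ (Fin n) → ℝ} (hf : ContDiff ℝ k f)
    (hmk : m + 1 ≤ k) (i : Fin n) : ContDiff ℝ m (pd i f) :=
  (hf.fderiv_right hmk).clm_apply contDiff_const

lemma pd_comm {f : EuclideanSpace ℝ (Fin n) → ℝ} (hf : ContDiff ℝ 2 f) (i j : Fin n) :
    pd i (pd j f) = pd j (pd i f) := by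
  funext w
  have hdf : DifferentiableAt ℝ (fderiv ℝ f) w :=
    ((hf.fderiv_right (m := 1) le_rfl).differentiable one_ne_zero).differentiableAt
  have hsnd : ∀ u v, fderiv ℝ (fun x => fderiv ℝ f x v) w u = fderiv ℝ (fderiv ℝ f) w u v := by
    intro u v
    simp [fderiv_clm_apply hdf (differentiableAt_const v)]
  change fderiv ℝ (fun x => fderiv ℝ f x _) w _ = fderiv ℝ (fun x => fderiv ℝ f x _) w _
  rw [hsnd, hsnd]
  exact hf.contDiffAt.isSymmSndFDerivAt (by simp) _ _

lemma sum_mul_mul_eq_zero_of_transpose_eq_neg {ι : Type*} [Fintype ι] {M : Matrix ι ι ℝ}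
    (hM : Mᵀ = -M) (u : ι → ℝ) : ∑ j, ∑ α, M j α * u α * u j = 0 := by
  have hswap : ∑ j, ∑ α, M j α * u α * u j = -∑ j, ∑ α, M j α * u α * u j := by
    conv_lhs => rw [Finset.sum_comm]
    simp only [← Finset.sum_neg_distrib]
    refine Finset.sum_congr rfl fun j _ => Finset.sum_congr rfl fun α _ => ?_
    have hMαj : M α j = -M j α := by simpa using congr_fun₂ hM j α
    rw [hMαj]
    ring
  linarith

section Gradient

variable {L : EuclideanSpace ℝ (Fin n) → ℝ} {w : EuclideanSpace ℝ (Fin n)} {lam : ℝ}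

noncomputable def revGrad (L : EuclideanSpace ℝ (Fin n) → ℝ) :
    EuclideanSpace ℝ (Fin n) → Fin n → ℝ :=
  fun x i => -pd i L x

noncomputable def matGrad (M : Matrix (Fin n) (Fin n) ℝ) (L : EuclideanSpace ℝ (Fin n) → ℝ) :
    EuclideanSpace ℝ (Fin n) → Fin n → ℝ :=
  fun x j => ∑ α, M j α * pd α L x

lemma differentiableAt_pd (hL : ContDiff ℝ 2 L) (i : Fin n) :
    DifferentiableAt ℝ (pd i L) w :=
  ((contDiff_pd (m := 1) hL le_rfl i).differentiable one_ne_zero).differentiableAt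

lemma differentiableAt_pd_pd (hL : ContDiff ℝ 3 L) (i j : Fin n) :
    DifferentiableAt ℝ (pd j (pd i L)) w :=
  differentiableAt_pd (contDiff_pd (m := 2) hL le_rfl i) j

lemma differentiableAt_matGrad (hL : ContDiff ℝ 2 L) (M : Matrix (Fin n) (Fin n) ℝ)
    (j : Fin n) : DifferentiableAt ℝ (fun x => matGrad M L x j) w :=
  DifferentiableAt.fun_sum fun α _ => (differentiableAt_pd hL α).const_mul _

lemma vact_matGrad_self_of_transpose_eq_neg {M : Matrix (Fin n) (Fin n) ℝ} (hM : Mᵀ = -M) :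
    vact (matGrad M L) L = fun _ => 0 := by
  funext x
  simp only [vact, matGrad, Finset.sum_mul]
  exact sum_mul_mul_eq_zero_of_transpose_eq_neg hM _

lemma pd_vact_revGrad_self (hL : ContDiff ℝ 2 L) (j : Fin n) :
    pd j (vact (revGrad L) L) = fun x => -2 * ∑ i, pd j (pd i L) x * pd i L x := by
  funext x
  have hRL : vact (revGrad L) L = fun x => -∑ i, pd i L x * pd i L x := by
    funext y
    simp [vact, revGrad]
  have hg : ∀ i, DifferentiableAt ℝ (pd i L) x := differentiableAt_pd hL
  rw [hRL, pd_neg, pd_sum _ _ (f := fun i x => pd i L x * pd i L x) fun i _ => (hg i).mul (hg i),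
    Finset.mul_sum, ← Finset.sum_neg_distrib]
  refine Finset.sum_congr rfl fun i _ => ?_
  rw [pd_mul _ (hg i) (hg i)]
  ring

lemma vact_revGrad_pd_of_eigen (hL : ContDiff ℝ 2 L)
    (heig : ∀ i, ∑ j, pd i (pd j L) w * pd j L w = lam * pd i L w) (i : Fin n) :
    vact (revGrad L) (pd i L) w = -lam * pd i L w := by
  rw [neg_mul, ← heig i, vact, ← Finset.sum_neg_distrib]
  refine Finset.sum_congr rfl fun j _ => ?_
  rw [revGrad, pd_comm hL j i]
  ring

lemma vact_revGrad_matGrad_of_eigen (hL : ContDiff ℝ 2 L)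
    (heig : ∀ i, ∑ j, pd i (pd j L) w * pd j L w = lam * pd i L w)
    (M : Matrix (Fin n) (Fin n) ℝ) (j : Fin n) :
    vact (revGrad L) (fun x => matGrad M L x j) w = -lam * matGrad M L w j := by
  simp only [matGrad]
  rw [vact_sum _ _ (f := fun α x => M j α * pd α L x) fun α _ =>
    (differentiableAt_pd hL α).const_mul _, Finset.mul_sum]
  refine Finset.sum_congr rfl fun α _ => ?_
  rw [vact_const_mul, vact_revGrad_pd_of_eigen hL heig]
  ring

lemma vact_revGrad_pd_vact_revGrad_self_of_eigen (hL : ContDiff ℝ 3 L)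
    (heig : ∀ i, ∑ j, pd i (pd j L) w * pd j L w = lam * pd i L w) (j : Fin n) :
    vact (revGrad L) (pd j (vact (revGrad L) L)) w =
      -2 * (∑ i, vact (revGrad L) (pd j (pd i L)) w * pd i L w - lam * (lam * pd j L w)) := by
  have hL2 : ContDiff ℝ 2 L := hL.of_le (by norm_num)
  have hg : ∀ i, DifferentiableAt ℝ (pd i L) w := differentiableAt_pd hL2
  have hHg : ∀ i, DifferentiableAt ℝ (pd j (pd i L)) w := fun i => differentiableAt_pd_pd hL i j
  rw [pd_vact_revGrad_self hL2, vact_const_mul,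
    vact_sum _ _ (f := fun i x => pd j (pd i L) x * pd i L x)
      fun i _ => (hHg i).mul (hg i), ← heig j]
  congr 1
  rw [Finset.mul_sum, ← Finset.sum_sub_distrib]
  refine Finset.sum_congr rfl fun i _ => ?_
  rw [vact_mul _ (hHg i) (hg i), vact_revGrad_pd_of_eigen hL2 heig]
  ring

lemma vact_revGrad_vact_matGrad_vact_revGrad_self_of_eigen (hL : ContDiff ℝ 3 L)
    (heig : ∀ i, ∑ j, pd i (pd j L) w * pd j L w = lam * pd i L w)
    (M : Matrix (Fin n) (Fin n) ℝ) :
    vact (revGrad L) (vact (matGrad M L) (vact (revGrad L) L)) w =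
      4 * lam ^ 2 * vact (matGrad M L) L w
        - 2 * ∑ j, matGrad M L w j * ∑ i, vact (revGrad L) (pd j (pd i L)) w * pd i L w := by
  have hL2 : ContDiff ℝ 2 L := hL.of_le (by norm_num)
  have hdRL : ∀ j, DifferentiableAt ℝ (pd j (vact (revGrad L) L)) w := fun j => by
    rw [pd_vact_revGrad_self hL2]
    exact (DifferentiableAt.fun_sum fun i _ =>
      (differentiableAt_pd_pd hL i j).mul (differentiableAt_pd hL2 i)).const_mul _
  rw [vact_vact _ (differentiableAt_matGrad hL2 M) hdRL, vact, Finset.mul_sum, Finset.mul_sum,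
    ← Finset.sum_sub_distrib]
  refine Finset.sum_congr rfl fun j _ => ?_
  rw [vact_revGrad_matGrad_of_eigen hL2 heig, vact_revGrad_pd_vact_revGrad_self_of_eigen hL heig,
    pd_vact_revGrad_self hL2]
  beta_reduce
  rw [heig]
  ring

end Gradient

/-- at a point `w` where the gradient is an eigenvector of the Hessian,
for the vector field `A` with components `a = M∇L` (`M` antisymmetric) and the reverse
gradient field `R`, one has
`(R([A,R]L))(w) = 2 ∑_{i,j,k,α} M_{jα} ∂_k L ∂_α L ∂³_{k i j} L ∂_i L`. -/
theorem stmt12 {n : ℕ} (L : EuclideanSpace ℝ (Fin n) → ℝ) (hL : ContDiff ℝ 3 L)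
    (w : EuclideanSpace ℝ (Fin n)) (lam : ℝ)
    -- ∇²L(w) ∇L(w) = λ ∇L(w), in coordinates
    (heig : ∀ i, ∑ j, pd i (pd j L) w * pd j L w = lam * pd i L w)
    (M : Matrix (Fin n) (Fin n) ℝ) (hM : Mᵀ = -M)
    (a : EuclideanSpace ℝ (Fin n) → Fin n → ℝ)
    (ha : ∀ x j, a x j = ∑ α, M j α * pd α L x)
    (r : EuclideanSpace ℝ (Fin n) → Fin n → ℝ)
    (hr : ∀ x i, r x i = -(pd i L x)) :
    vact r (fun x => vact a (vact r L) x - vact r (vact a L) x) w =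
      2 * ∑ i, ∑ j, ∑ k, ∑ α,
        M j α * pd k L w * pd α L w * pd k (pd i (pd j L)) w * pd i L w := by
  obtain rfl : a = matGrad M L := funext fun x => funext (ha x)
  obtain rfl : r = revGrad L := funext fun x => funext (hr x)
  have hAL := vact_matGrad_self_of_transpose_eq_neg (L := L) hM
  simp only [hAL, vact_const, sub_zero]
  change vact _ (vact _ _) w = _
  rw [vact_revGrad_vact_matGrad_vact_revGrad_self_of_eigen hL heig, hAL]
  simp only [vact, matGrad, revGrad, mul_zero, zero_sub, Finset.mul_sum, Finset.sum_mul,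
    ← Finset.sum_neg_distrib]
  rw [Finset.sum_comm]
  refine Finset.sum_congr rfl fun i _ => Finset.sum_congr rfl fun j _ =>
    Finset.sum_congr rfl fun k _ => Finset.sum_congr rfl fun α _ => ?_
  rw [pd_comm (hL.of_le (by norm_num)) i j]
  ring
end

section
/- Let n be a positive integer, let g : Fin n → ℝ, and let T : Fin n → Fin n → Fin n → ℝ be an indexed family of reals satisfying T(k, i, j) · g(α) = T(k, i, α) · g(j) for all indices i, k, j, α. Then for every antisymmetric matrix M ∈ ℝ^{n×n} (Mᵀ = −M), the fourfold contraction vanishes: ∑_{i,k,j,α} M_{jα} · g(k) · g(α) · T(k, i, j) · g(i) = 0. -/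
/-!
Summing over `i` and `k` first turns the contraction into the Frobenius pairing `∑ M_{jα} S_{jα}`
of `M` with `S_{jα} = ∑_{i,k} g_k T_{kij} g_α g_i`. The hypothesis on `T` says exactly that `S` is
symmetric, and an antisymmetric matrix pairs to zero with a symmetric one, since the pairing
equals its own negative.
-/

open Matrix

theorem Matrix.sum_sum_mul_eq_zero_of_transpose_eq_neg {ι R : Type*} [Fintype ι] [Ring R]
    [NoZeroDivisors R] [CharZero R] {M S : Matrix ι ι R} (hM : Mᵀ = -M) (hS : Sᵀ = S) :
    ∑ j, ∑ α, M j α * S j α = 0 := by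
  have hswap (j α : ι) : M j α * S j α = -(M α j * S α j) := by
    rw [← transpose_apply M, hM, ← transpose_apply S, hS, neg_apply, neg_mul]
  refine CharZero.eq_neg_self_iff.mp ?_
  calc ∑ j, ∑ α, M j α * S j α
      = ∑ α, ∑ j, -(M α j * S α j) := by
        rw [Finset.sum_comm]
        exact Finset.sum_congr rfl fun α _ ↦ Finset.sum_congr rfl fun j _ ↦ hswap j α
    _ = -∑ j, ∑ α, M j α * S j α := by simp only [Finset.sum_neg_distrib]

theorem stmt15_general {n : ℕ} (g : Fin n → ℝ) (T : Fin n → Fin n → Fin n → ℝ)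
    (hT : ∀ k i j α, T k i j * g α = T k i α * g j)
    (M : Matrix (Fin n) (Fin n) ℝ) (hM : Mᵀ = -M) :
    ∑ i, ∑ k, ∑ j, ∑ α, M j α * g k * g α * T k i j * g i = 0 := by
  set S : Matrix (Fin n) (Fin n) ℝ := of fun j α ↦ ∑ i, ∑ k, g k * (T k i j * g α) * g i
  have hS : Sᵀ = S := by
    ext j α
    simp only [S, transpose_apply, of_apply, hT _ _ α j]
  calc ∑ i, ∑ k, ∑ j, ∑ α, M j α * g k * g α * T k i j * g i
      = ∑ j, ∑ α, ∑ i, ∑ k, M j α * g k * g α * T k i j * g i := by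
        rw [Finset.sum_congr rfl fun i _ ↦ Finset.sum_comm_cycle.symm]
        exact Finset.sum_comm_cycle.symm
    _ = ∑ j, ∑ α, M j α * S j α := by
        simp only [S, of_apply, Finset.mul_sum]
        refine Finset.sum_congr rfl fun j _ ↦ Finset.sum_congr rfl fun α _ ↦
          Finset.sum_congr rfl fun i _ ↦ Finset.sum_congr rfl fun k _ ↦ ?_
        ring
    _ = 0 := sum_sum_mul_eq_zero_of_transpose_eq_neg hM hS

/-- if `T(k,i,j) g(α) = T(k,i,α) g(j)` for all indices, then the fourfold
contraction `∑ M_{jα} g(k) g(α) T(k,i,j) g(i)` vanishes for every antisymmetric matrix `M`. -/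
theorem stmt15 {n : ℕ} (hn : 0 < n) (g : Fin n → ℝ) (T : Fin n → Fin n → Fin n → ℝ)
    (hT : ∀ k i j α, T k i j * g α = T k i α * g j)
    (M : Matrix (Fin n) (Fin n) ℝ) (hM : Mᵀ = -M) :
    ∑ i, ∑ k, ∑ j, ∑ α, M j α * g k * g α * T k i j * g i = 0 :=
  stmt15_general g T hT M hM
end
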